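/- arXiv:1311.1929 — 3 statements merged into one kernel-verified Lean document; each statement's English description precedes it below -/
import Mathlib

section
/- Let M be a symmetric negative definite n×n real matrix whose off-diagonal entries are all nonnegative. Then there exists a vector s ∈ ℤ^n with all entries strictly positive such that every entry of M·s is strictly negative. -/
open Matrix

/-- A symmetric negative definite real matrix with nonnegative off-diagonal
entries admits a strictly positive integer vector `s` with all entries of
`M · s` strictly negative. -/
theorem stmt0 (n : ℕ) (M : Matrix (Fin n) (Fin n) ℝ)
    (hsymm : M.IsSymm)
    (hneg : ∀ x : Fin n → ℝ, x ≠ 0 → x ⬝ᵥ M.mulVec x < 0)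
    (hoff : ∀ i j : Fin n, i ≠ j → 0 ≤ M i j) :
    ∃ s : Fin n → ℤ, (∀ i, 0 < s i) ∧
      ∀ j, M.mulVec (fun i => (s i : ℝ)) j < 0 := by
  -- Step 1: M is invertible (as a linear map), so solve M s = -𝟙.
  have hinj : Function.Injective M.mulVecLin := by
    rw [← LinearMap.ker_eq_bot, LinearMap.ker_eq_bot']
    intro x hx
    by_contra hx0
    have h := hneg x hx0
    rw [show M.mulVec x = 0 from hx] at h
    simp at h
  have hsurj := LinearMap.injective_iff_surjective.mp hinj
  obtain ⟨s, hs⟩ := hsurj (fun _ => (-1 : ℝ))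
  have hMs : M.mulVec s = fun _ => -1 := hs
  -- Step 2: s is nonnegative.
  have hnn : ∀ i, 0 ≤ s i := by
    by_contra h
    push_neg at h
    obtain ⟨i0, hi0⟩ := h
    set sm : Fin n → ℝ := fun i => max (-s i) 0 with hsmdef
    set sp : Fin n → ℝ := fun i => max (s i) 0 with hspdef
    have hsmnn : ∀ i, 0 ≤ sm i := fun i => le_max_right _ _
    have hspnn : ∀ i, 0 ≤ sp i := fun i => le_max_right _ _
    have hdiff : sp - sm = s := by
      funext i
      simp only [Pi.sub_apply, hsmdef, hspdef]
      rcases le_total (s i) 0 with hle | hle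
      · rw [max_eq_right hle, max_eq_left (by linarith)]; ring
      · rw [max_eq_left hle, max_eq_right (by linarith)]; ring
    have hsm0 : sm ≠ 0 := by
      intro h0
      have h1 : sm i0 = 0 := congrFun h0 i0
      have h2 : (0:ℝ) < -s i0 := by linarith
      have := le_max_left (-s i0) (0:ℝ)
      rw [show max (-s i0) 0 = sm i0 from rfl, h1] at this
      linarith
    have hlt := hneg sm hsm0
    have heq : sm ⬝ᵥ M.mulVec sm = sm ⬝ᵥ M.mulVec sp - sm ⬝ᵥ M.mulVec s := by
      have hdiff2 : sp - s = sm := by rw [← hdiff, sub_sub_cancel]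
      rw [← dotProduct_sub, ← Matrix.mulVec_sub, hdiff2]
    have hA : 0 ≤ sm ⬝ᵥ M.mulVec sp := by
      rw [dotProduct]
      apply Finset.sum_nonneg
      intro i _
      rw [Matrix.mulVec, dotProduct, Finset.mul_sum]
      apply Finset.sum_nonneg
      intro j _
      rcases eq_or_ne i j with rfl | hij
      · rcases le_total (s i) 0 with hle | hle
        · have hz : sp i = 0 := max_eq_right hle
          simp [hz]
        · have hz : sm i = 0 := max_eq_right (by linarith)
          simp [hz]
      · exact mul_nonneg (hsmnn i) (mul_nonneg (hoff i j hij) (hspnn j))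
    have hB : sm ⬝ᵥ M.mulVec s ≤ 0 := by
      rw [hMs, dotProduct]
      apply Finset.sum_nonpos
      intro i _
      have := hsmnn i
      nlinarith
    linarith
  -- Step 3: s is strictly positive.
  have hpos : ∀ i, 0 < s i := by
    intro i
    rcases (hnn i).lt_or_eq with hlt | heq0
    · exact hlt
    · exfalso
      have h1 : M.mulVec s i = -1 := congrFun hMs i
      rw [Matrix.mulVec, dotProduct] at h1
      have h2 : 0 ≤ ∑ j, M i j * s j := by
        apply Finset.sum_nonneg
        intro j _
        rcases eq_or_ne i j with rfl | hij
        · rw [← heq0]; simp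
        · exact mul_nonneg (hoff i j hij) (hnn j)
      linarith
  -- Step 4: round N·s up for a large N.
  obtain ⟨N, hN⟩ := exists_nat_gt (∑ j, ∑ k, |M j k|)
  have htotnn : (0:ℝ) ≤ ∑ j, ∑ k, |M j k| :=
    Finset.sum_nonneg fun j _ => Finset.sum_nonneg fun k _ => abs_nonneg _
  have hNpos : (0:ℝ) < N := lt_of_le_of_lt htotnn hN
  refine ⟨fun i => ⌈(N:ℝ) * s i⌉, ?_, ?_⟩
  · intro i
    exact Int.ceil_pos.mpr (mul_pos hNpos (hpos i))
  · intro j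
    have hball : M.mulVec (fun i => ((⌈(N:ℝ) * s i⌉ : ℤ) : ℝ)) j
        = (N:ℝ) * M.mulVec s j + ∑ k, M j k * ((⌈(N:ℝ)*s k⌉:ℝ) - (N:ℝ)*s k) := by
      simp only [Matrix.mulVec, dotProduct, Finset.mul_sum]
      rw [← Finset.sum_add_distrib]
      apply Finset.sum_congr rfl
      intro k _
      ring
    rw [hball, hMs]
    have herr : ∑ k, M j k * ((⌈(N:ℝ)*s k⌉:ℝ) - (N:ℝ)*s k) ≤ ∑ k, |M j k| := by
      apply Finset.sum_le_sum
      intro k _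
      have h0 : 0 ≤ (⌈(N:ℝ)*s k⌉:ℝ) - (N:ℝ)*s k := by
        linarith [Int.le_ceil ((N:ℝ)*s k)]
      have h1 : (⌈(N:ℝ)*s k⌉:ℝ) - (N:ℝ)*s k ≤ 1 := by
        linarith [Int.ceil_lt_add_one ((N:ℝ)*s k)]
      calc M j k * ((⌈(N:ℝ)*s k⌉:ℝ) - (N:ℝ)*s k)
          ≤ |M j k| * ((⌈(N:ℝ)*s k⌉:ℝ) - (N:ℝ)*s k) :=
            mul_le_mul_of_nonneg_right (le_abs_self _) h0
        _ ≤ |M j k| * 1 := mul_le_mul_of_nonneg_left h1 (abs_nonneg _)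
        _ = |M j k| := mul_one _
    have hrow : ∑ k, |M j k| ≤ ∑ j', ∑ k, |M j' k| :=
      Finset.single_le_sum (f := fun j' => ∑ k, |M j' k|) (fun j' _ => Finset.sum_nonneg fun k _ => abs_nonneg _)
        (Finset.mem_univ j)
    show (N:ℝ) * (-1) + _ < 0
    have hne : (N:ℝ) * (-1) = -(N:ℝ) := by ring
    rw [hne]
    linarith
end

section
/- Let M be a symmetric negative definite n×n real matrix whose off-diagonal entries are all nonnegative. Then every entry of the inverse matrix M⁻¹ is nonpositive. -/
open Matrix

/-- Every entry of the inverse of a symmetric negative definite real matrix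
with nonnegative off-diagonal entries is nonpositive. -/
theorem stmt1 (n : ℕ) (M : Matrix (Fin n) (Fin n) ℝ)
    (hsymm : M.IsSymm)
    (hneg : ∀ x : Fin n → ℝ, x ≠ 0 → x ⬝ᵥ M.mulVec x < 0)
    (hoff : ∀ i j : Fin n, i ≠ j → 0 ≤ M i j) :
    ∀ i j : Fin n, M⁻¹ i j ≤ 0 := by
  intro i j
  set x : Fin n → ℝ := fun k => M⁻¹ k j with hx
  set v : Fin n → ℝ := fun k => max (x k) 0 with hv
  set u : Fin n → ℝ := fun k => max (-x k) 0 with hu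
  by_cases hv0 : v = 0
  · have h1 : v i = 0 := congrFun hv0 i
    have h2 : x i ≤ v i := le_max_left _ _
    simpa [h1] using h2
  · exfalso
    have hdet : IsUnit M.det := by
      rw [isUnit_iff_ne_zero]
      intro h
      obtain ⟨y, hy0, hyM⟩ := Matrix.exists_mulVec_eq_zero_iff.mpr h
      have := hneg y hy0
      rw [hyM] at this
      simp at this
    have hMinv : M * M⁻¹ = 1 := Matrix.mul_nonsing_inv M hdet
    have hMx : ∀ k, M.mulVec x k = (1 : Matrix (Fin n) (Fin n) ℝ) k j := by
      intro k
      rw [← hMinv, Matrix.mul_apply]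
      simp [Matrix.mulVec, dotProduct, hx]
    have hvx : 0 ≤ v ⬝ᵥ M.mulVec x := by
      rw [dotProduct]
      simp only [hMx, Matrix.one_apply, mul_ite, mul_one, mul_zero]
      rw [Finset.sum_ite_eq' Finset.univ j v]
      simp [hv, le_max_right]
    have hvu : 0 ≤ v ⬝ᵥ M.mulVec u := by
      rw [dotProduct]
      apply Finset.sum_nonneg
      intro k _
      rw [Matrix.mulVec, dotProduct, Finset.mul_sum]
      apply Finset.sum_nonneg
      intro l _
      rcases eq_or_ne k l with rfl | hkl
      · have huv : v k * u k = 0 := by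
          rcases le_total (x k) 0 with h | h
          · simp [hv, max_eq_right h]
          · simp [hu, max_eq_right (neg_nonpos_of_nonneg h)]
        have heq : v k * (M k k * u k) = M k k * (v k * u k) := by ring
        rw [heq, huv, mul_zero]
      · exact mul_nonneg (le_max_right _ _)
          (mul_nonneg (hoff k l hkl) (le_max_right _ _))
    have hveq : v = x + u := by
      funext k
      simp only [hv, hu, Pi.add_apply]
      rcases le_total (x k) 0 with h | h
      · rw [max_eq_right h, max_eq_left (neg_nonneg.mpr h)]; ring
      · rw [max_eq_left h, max_eq_right (neg_nonpos_of_nonneg h)]; ring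
    have hvv : v ⬝ᵥ M.mulVec v = v ⬝ᵥ M.mulVec x + v ⬝ᵥ M.mulVec u := by
      rw [hveq, Matrix.mulVec_add, dotProduct_add]
    have := hneg v hv0
    rw [hvv] at this
    linarith
end

section
/- Let M be the symmetric n×n intersection matrix of a weighted graph in which vertices j and k are connected by an edge (Mⱼₖ = Mₖⱼ = 1). Let M' be the (n+1)×(n+1) matrix obtained by 'blowing up the edge jk': append a new row and column with diagonal entry −1, set entries (j, n+1), (n+1, j), (k, n+1), (n+1, k) to 1, set entries (j,k) and (k,j) to 0, and decrease each of the diagonal entries (j,j) and (k,k) by 1. Then M' is congruent over ℤ to M ⊕ (−1), and det(M') = −det(M). -/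
open Matrix

/-- The matrix obtained from `M` by blowing up the edge between vertices `j`
and `k`: append a new row/column with diagonal entry `-1` and entries `1`
against `j` and `k`, disconnect `j` from `k`, and decrease both diagonal
entries `(j,j)` and `(k,k)` by `1`. -/
def blowUpEdge {n : ℕ} (M : Matrix (Fin n) (Fin n) ℤ) (j k : Fin n) :
    Matrix (Fin (n + 1)) (Fin (n + 1)) ℤ :=
  Matrix.of fun p q =>
    if hp : (p : ℕ) < n then
      if hq : (q : ℕ) < n then
        (if ((⟨p, hp⟩ : Fin n) = j ∧ (⟨q, hq⟩ : Fin n) = k) ∨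
            ((⟨p, hp⟩ : Fin n) = k ∧ (⟨q, hq⟩ : Fin n) = j) then 0
         else if ((⟨p, hp⟩ : Fin n) = j ∧ (⟨q, hq⟩ : Fin n) = j) ∨
            ((⟨p, hp⟩ : Fin n) = k ∧ (⟨q, hq⟩ : Fin n) = k) then
          M ⟨p, hp⟩ ⟨q, hq⟩ - 1
         else M ⟨p, hp⟩ ⟨q, hq⟩)
      else if (⟨p, hp⟩ : Fin n) = j ∨ (⟨p, hp⟩ : Fin n) = k then 1 else 0
    else if hq : (q : ℕ) < n then
      if (⟨q, hq⟩ : Fin n) = j ∨ (⟨q, hq⟩ : Fin n) = k then 1 else 0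
    else -1

/-- The block diagonal matrix `M ⊕ (-1)`. -/
def dirSumNegOne {n : ℕ} (M : Matrix (Fin n) (Fin n) ℤ) :
    Matrix (Fin (n + 1)) (Fin (n + 1)) ℤ :=
  Matrix.of fun i j =>
    if hi : (i : ℕ) < n then
      if hj : (j : ℕ) < n then M ⟨i, hi⟩ ⟨j, hj⟩ else 0
    else if (j : ℕ) < n then 0 else -1

/-- indicator vector: 1 at `j` and `k`, `-1` at the last index, 0 elsewhere -/
def cVec {n : ℕ} (j k : Fin n) (q : Fin (n + 1)) : ℤ :=
  if hq : (q : ℕ) < n then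
    (if (⟨q, hq⟩ : Fin n) = j ∨ (⟨q, hq⟩ : Fin n) = k then 1 else 0)
  else -1

/-- The change-of-basis matrix. -/
def Pblow {n : ℕ} (j k : Fin n) : Matrix (Fin (n + 1)) (Fin (n + 1)) ℤ :=
  Matrix.of fun p q =>
    (if (p : ℕ) < n ∧ (p : ℕ) = (q : ℕ) then 1 else 0) +
    (if (p : ℕ) = n then cVec j k q else 0)

lemma Pblow_lowerTriangular {n : ℕ} (j k : Fin n) :
    ∀ p q : Fin (n + 1), p < q → Pblow j k p q = 0 := by
  intro p q hpq
  have h1 : (p : ℕ) < (q : ℕ) := hpq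
  have h2 : (q : ℕ) ≤ n := Nat.lt_succ_iff.mp q.isLt
  simp only [Pblow, Matrix.of_apply]
  rw [if_neg (by omega), if_neg (by omega)]
  ring

lemma Pblow_det {n : ℕ} (j k : Fin n) : (Pblow j k).det = -1 := by
  rw [Matrix.det_of_lowerTriangular _ (fun p q h => Pblow_lowerTriangular j k p q h)]
  rw [Fin.prod_univ_castSucc]
  have h1 : ∀ i : Fin n, Pblow j k i.castSucc i.castSucc = 1 := by
    intro i
    simp [Pblow, i.isLt, Nat.ne_of_lt i.isLt]
  have h2 : Pblow j k (Fin.last n) (Fin.last n) = -1 := by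
    simp [Pblow, cVec]
  simp [h1, h2]

lemma DP_apply {n : ℕ} (M : Matrix (Fin n) (Fin n) ℤ) (j k : Fin n)
    (r q : Fin (n + 1)) :
    (dirSumNegOne M * Pblow j k) r q =
      (if (q : ℕ) < n then dirSumNegOne M r q else 0) +
      (if (r : ℕ) = n then -(cVec j k q) else 0) := by
  rw [Matrix.mul_apply, Fin.sum_univ_castSucc]
  have hlast : dirSumNegOne M r (Fin.last n) * Pblow j k (Fin.last n) q =
      (if (r : ℕ) = n then -(cVec j k q) else 0) := by
    by_cases hr : (r : ℕ) < n
    · simp [dirSumNegOne, Pblow, hr, Nat.ne_of_lt hr]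
    · have hr' : (r : ℕ) = n := by omega
      simp [dirSumNegOne, Pblow, hr, hr']
  rw [hlast]
  congr 1
  have hterm : ∀ i : Fin n, Pblow j k i.castSucc q =
      (if (i : ℕ) = (q : ℕ) then (1 : ℤ) else 0) := by
    intro i
    simp only [Pblow, Matrix.of_apply, Fin.coe_castSucc]
    rw [if_neg (Nat.ne_of_lt i.isLt), add_zero]
    by_cases h : (i : ℕ) = (q : ℕ)
    · rw [if_pos ⟨i.isLt, h⟩, if_pos h]
    · rw [if_neg (by tauto), if_neg h]
  simp only [hterm]
  by_cases hq : (q : ℕ) < n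
  · rw [if_pos hq]
    rw [Finset.sum_eq_single (⟨q, hq⟩ : Fin n)]
    · rw [if_pos rfl, mul_one]
      have hcast : (Fin.castSucc (⟨q, hq⟩ : Fin n)) = q := Fin.ext rfl
      rw [hcast]
    · intro b _ hb
      rw [if_neg (fun h => hb (Fin.ext h)), mul_zero]
    · intro h; exact absurd (Finset.mem_univ _) h
  · rw [if_neg hq]
    apply Finset.sum_eq_zero
    intro i _
    rw [if_neg (by omega), mul_zero]

lemma PtX_apply {n : ℕ} (j k : Fin n) (X : Matrix (Fin (n + 1)) (Fin (n + 1)) ℤ)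
    (p q : Fin (n + 1)) :
    ((Pblow j k)ᵀ * X) p q =
      (if (p : ℕ) < n then X p q else 0) + cVec j k p * X (Fin.last n) q := by
  rw [Matrix.mul_apply, Fin.sum_univ_castSucc]
  simp only [Matrix.transpose_apply]
  have hlast : Pblow j k (Fin.last n) p = cVec j k p := by
    simp [Pblow]
  rw [hlast]
  congr 1
  have hterm : ∀ i : Fin n, Pblow j k i.castSucc p =
      (if (i : ℕ) = (p : ℕ) then (1 : ℤ) else 0) := by
    intro i
    simp only [Pblow, Matrix.of_apply, Fin.coe_castSucc]
    rw [if_neg (Nat.ne_of_lt i.isLt), add_zero]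
    by_cases h : (i : ℕ) = (p : ℕ)
    · rw [if_pos ⟨i.isLt, h⟩, if_pos h]
    · rw [if_neg (by tauto), if_neg h]
  simp only [hterm]
  by_cases hp : (p : ℕ) < n
  · rw [if_pos hp]
    rw [Finset.sum_eq_single (⟨p, hp⟩ : Fin n)]
    · rw [if_pos rfl, one_mul]
      have hcast : (Fin.castSucc (⟨p, hp⟩ : Fin n)) = p := Fin.ext rfl
      rw [hcast]
    · intro b _ hb
      rw [if_neg (fun h => hb (Fin.ext h)), zero_mul]
    · intro h; exact absurd (Finset.mem_univ _) h
  · rw [if_neg hp]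
    apply Finset.sum_eq_zero
    intro i _
    rw [if_neg (by omega), zero_mul]

lemma det_dirSumNegOne {n : ℕ} (M : Matrix (Fin n) (Fin n) ℤ) :
    (dirSumNegOne M).det = -M.det := by
  have heq : dirSumNegOne M =
      (Matrix.fromBlocks M 0 0 (-1 : Matrix (Fin 1) (Fin 1) ℤ)).submatrix
        finSumFinEquiv.symm finSumFinEquiv.symm := by
    ext i l
    obtain ⟨c, rfl⟩ := finSumFinEquiv.surjective i
    obtain ⟨d, rfl⟩ := finSumFinEquiv.surjective l
    rcases c with a | a <;> rcases d with b | b <;>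
      simp [dirSumNegOne, finSumFinEquiv_apply_left, finSumFinEquiv_apply_right,
        a.isLt, Matrix.one_apply, Fin.fin_one_eq_zero]
  rw [heq, Matrix.det_submatrix_equiv_self, Matrix.det_fromBlocks_zero₂₁]
  simp

/-- Blowing up an edge of a plumbing graph produces a matrix congruent over ℤ
to `M ⊕ (-1)`, and its determinant is `- det M`. -/
theorem stmt3 (n : ℕ) (M : Matrix (Fin n) (Fin n) ℤ) (hsymm : M.IsSymm)
    (j k : Fin n) (hjk : j ≠ k) (hMjk : M j k = 1) (hMkj : M k j = 1) :
    (∃ P : Matrix (Fin (n + 1)) (Fin (n + 1)) ℤ, IsUnit P.det ∧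
      blowUpEdge M j k = Pᵀ * dirSumNegOne M * P) ∧
      (blowUpEdge M j k).det = - M.det := by
  have hcong : blowUpEdge M j k = (Pblow j k)ᵀ * dirSumNegOne M * Pblow j k := by
    ext p q
    rw [Matrix.mul_assoc, PtX_apply, DP_apply, DP_apply]
    have hDlast : ∀ q' : Fin (n + 1), (if (q' : ℕ) < n then dirSumNegOne M (Fin.last n) q' else 0) = 0 := by
      intro q'
      by_cases hq' : (q' : ℕ) < n
      · simp [dirSumNegOne, hq']
      · simp [hq']
    rw [hDlast]
    have hlastn : ((Fin.last n : Fin (n + 1)) : ℕ) = n := rfl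
    rw [if_pos hlastn]
    by_cases hp : (p : ℕ) < n <;> by_cases hq : (q : ℕ) < n
    · -- both interior
      rw [if_pos hp, if_pos hq, if_neg (by omega)]
      simp only [blowUpEdge, dirSumNegOne, cVec, Matrix.of_apply]
      rw [dif_pos hp, dif_pos hq, dif_pos hp, dif_pos hq, dif_pos hp, dif_pos hq]
      by_cases h1 : (⟨p, hp⟩ : Fin n) = j <;>
        by_cases h2 : (⟨p, hp⟩ : Fin n) = k <;>
        by_cases h3 : (⟨q, hq⟩ : Fin n) = j <;>
        by_cases h4 : (⟨q, hq⟩ : Fin n) = k <;>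
        simp_all <;> omega
    · rw [if_pos hp, if_neg hq, if_neg (by omega)]
      simp only [blowUpEdge, cVec, Matrix.of_apply]
      rw [dif_pos hp, dif_neg hq, dif_pos hp, dif_neg hq]
      by_cases h1 : (⟨p, hp⟩ : Fin n) = j ∨ (⟨p, hp⟩ : Fin n) = k <;> simp [h1]
    · rw [if_neg hp]
      simp only [blowUpEdge, cVec, Matrix.of_apply]
      by_cases h1 : (⟨q, hq⟩ : Fin n) = j ∨ (⟨q, hq⟩ : Fin n) = k <;> simp [h1, hp, hq]
    · rw [if_neg hp]
      simp only [blowUpEdge, cVec, Matrix.of_apply]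
      simp [hp, hq]
  refine ⟨⟨Pblow j k, ?_, hcong⟩, ?_⟩
  · rw [Pblow_det]
    exact isUnit_one.neg
  · rw [hcong, Matrix.det_mul, Matrix.det_mul, Matrix.det_transpose, Pblow_det,
      det_dirSumNegOne]
    ring
end
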